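/- For all real c and s with s ≥ 4 and 1/2 − √(1/4 − 1/s) ≤ c ≤ 1/2 + √(1/4 − 1/s) (these bounds are the two real roots of the quadratic s·c² − s·c + 1 = 0), the minimum of the three quantities (1/2)·log₂ A(c,s), (1/2)·log₂ B(c,s), and (1/2)·log₂ C(c,s) equals (1/2)·log₂ C(c,s); equivalently, C(c,s) ≤ A(c,s) and C(c,s) ≤ B(c,s). -/

import Mathlib

open Real

/-- `A c s = c²·s + 1`, the argument of the logarithm in `TE(φ→X) = TE(φ→Y)`. -/
noncomputable def A (c s : ℝ) : ℝ := c ^ 2 * s + 1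

/-- `B c s = (4c⁴s + 2c² + 2)/(2c² + 2)`, the argument of the logarithm in `TE(φ→Z)`. -/
noncomputable def B (c s : ℝ) : ℝ := (4 * c ^ 4 * s + 2 * c ^ 2 + 2) / (2 * c ^ 2 + 2)

/-- `C c s = (4c⁴s + 2c² + 2)/(c³s/(c²s+1) + c² + 2)`, the argument of the logarithm in
`TE(X→Z) = TE(Y→Z)`. -/
noncomputable def C (c s : ℝ) : ℝ :=
  (4 * c ^ 4 * s + 2 * c ^ 2 + 2) / (c ^ 3 * s / (c ^ 2 * s + 1) + c ^ 2 + 2)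

/-! The chain is `C ≤ B ≤ A`. `B ≤ A` reduces to `c² ≤ 1`, and `C ≤ B` to comparing the
denominators, i.e. to `c² · (s c² − s c + 1) ≤ 0`, which is exactly the condition that `c`
lies between the roots of `s c² − s c + 1`. -/

theorem mul_sq_sub_mul_add_one_nonpos {c s : ℝ} (hs : 4 ≤ s)
    (hc_lo : 1 / 2 - √(1 / 4 - 1 / s) ≤ c) (hc_hi : c ≤ 1 / 2 + √(1 / 4 - 1 / s)) :
    s * c ^ 2 - s * c + 1 ≤ 0 := by
  have hs0 : 0 < s := by linarith
  have hdisc : 0 ≤ 1 / 4 - 1 / s := by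
    rw [sub_nonneg]
    exact one_div_le_one_div_of_le (by norm_num) hs
  have hsq : (c - 1 / 2) ^ 2 ≤ 1 / 4 - 1 / s := by
    rw [← sq_sqrt hdisc]
    exact sq_le_sq' (by linarith) (by linarith)
  have hscaled := mul_le_mul_of_nonneg_left hsq hs0.le
  rw [mul_sub, mul_one_div_cancel hs0.ne'] at hscaled
  linarith

theorem sq_le_one_of_mul_sq_sub_mul_add_one_nonpos {c s : ℝ} (hs : 0 ≤ s)
    (hq : s * c ^ 2 - s * c + 1 ≤ 0) : c ^ 2 ≤ 1 := by
  have hc : c ^ 2 < c := by nlinarith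
  nlinarith

theorem B_le_A {c s : ℝ} (hs : 0 ≤ s) (hc : c ^ 2 ≤ 1) : B c s ≤ A c s := by
  unfold A B
  rw [div_le_iff₀ (by positivity)]
  nlinarith [mul_nonneg (mul_nonneg hs (sq_nonneg c)) (sub_nonneg.2 hc)]

theorem denom_B_le_denom_C {c s : ℝ} (hs : 0 ≤ s) (hq : s * c ^ 2 - s * c + 1 ≤ 0) :
    2 * c ^ 2 + 2 ≤ c ^ 3 * s / (c ^ 2 * s + 1) + c ^ 2 + 2 := by
  have hc : c ^ 2 ≤ c ^ 3 * s / (c ^ 2 * s + 1) := by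
    rw [le_div_iff₀ (by positivity)]
    nlinarith [mul_nonpos_of_nonneg_of_nonpos (sq_nonneg c) hq]
  linarith

theorem C_pos {c s : ℝ} (hs : 0 ≤ s) (hq : s * c ^ 2 - s * c + 1 ≤ 0) : 0 < C c s :=
  div_pos (by positivity) ((by positivity : (0 : ℝ) < 2 * c ^ 2 + 2).trans_le
    (denom_B_le_denom_C hs hq))

theorem C_le_B {c s : ℝ} (hs : 0 ≤ s) (hq : s * c ^ 2 - s * c + 1 ≤ 0) : C c s ≤ B c s :=
  div_le_div_of_nonneg_left (by positivity) (by positivity) (denom_B_le_denom_C hs hq)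

/-- For `s ≥ 4` and `c` between the two real roots `1/2 ∓ √(1/4 − 1/s)` of
`s·c² − s·c + 1 = 0`, the minimum of the three transfer-entropy expressions is
`(1/2)·log₂ C(c,s)`; equivalently `C(c,s) ≤ A(c,s)` and `C(c,s) ≤ B(c,s)`. -/
theorem stmt2 (c s : ℝ) (hs : 4 ≤ s)
    (hc_lo : 1 / 2 - Real.sqrt (1 / 4 - 1 / s) ≤ c)
    (hc_hi : c ≤ 1 / 2 + Real.sqrt (1 / 4 - 1 / s)) :
    min (min ((1 / 2) * Real.logb 2 (A c s)) ((1 / 2) * Real.logb 2 (B c s)))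
        ((1 / 2) * Real.logb 2 (C c s)) = (1 / 2) * Real.logb 2 (C c s)
      ∧ C c s ≤ A c s ∧ C c s ≤ B c s := by
  have hs0 : 0 ≤ s := by linarith
  have hq := mul_sq_sub_mul_add_one_nonpos hs hc_lo hc_hi
  have hCB := C_le_B hs0 hq
  have hCA := hCB.trans (B_le_A hs0 (sq_le_one_of_mul_sq_sub_mul_add_one_nonpos hs0 hq))
  have half_logb_le {x : ℝ} (hx : C c s ≤ x) :
      (1 / 2) * logb 2 (C c s) ≤ (1 / 2) * logb 2 x :=
    mul_le_mul_of_nonneg_left (logb_le_logb_of_le one_lt_two (C_pos hs0 hq) hx) (by norm_num)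
  exact ⟨min_eq_right (le_min (half_logb_le hCA) (half_logb_le hCB)), hCA, hCB⟩
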